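/- arXiv:2308.06703 — 2 statements merged into one kernel-verified Lean document; each statement's English description precedes it below -/
import Mathlib

section
/- Let d ≥ 1, let σ²: Fin d → ℝ≥0, let μ be the product measure on ℝ^d whose i-th coordinate is the centered real Gaussian measure with variance σᵢ², let ε ≥ 0, and let w, w* ∈ ℝ^d satisfy σᵢ²·(wᵢ − wᵢ*) = 0 for every i (i.e., w is a standard risk minimizer: it agrees with w* on every coordinate with σᵢ² > 0). Then the standard risk of w is 0 and the adversarial risk of w equals (ε²/2)·‖w‖₂². -/
open MeasureTheory ProbabilityTheory
open scoped NNReal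

/-- The standard risk under the product Gaussian measure. -/
noncomputable def stdRisk (d : ℕ) (σsq : Fin d → ℝ≥0) (wstar : Fin d → ℝ)
    (w : Fin d → ℝ) : ℝ :=
  ∫ x : Fin d → ℝ, (1/2) * (∑ i, x i * (w i - wstar i))^2
      ∂(Measure.pi fun i => gaussianReal 0 (σsq i))

/-- The adversarial risk under the product Gaussian measure. -/
noncomputable def advRisk (d : ℕ) (σsq : Fin d → ℝ≥0) (wstar : Fin d → ℝ) (ε : ℝ)
    (w : Fin d → ℝ) : ℝ :=
  ∫ x : Fin d → ℝ,
      sSup ((fun (Δ : Fin d → ℝ) =>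
          (1/2) * ((∑ i, x i * (w i - wstar i)) + ∑ i, Δ i * w i)^2) ''
        {Δ | Real.sqrt (∑ i, (Δ i)^2) ≤ ε})
      ∂(Measure.pi fun i => gaussianReal 0 (σsq i))

/-! On the standard minimizer the residual `⟨x, w - w*⟩` vanishes almost surely: each coordinate
either has zero variance, so `xᵢ = 0` a.s., or satisfies `wᵢ = wᵢ*`. Both risks are then integrals
of constants, and the adversarial one is the maximum of `⟨Δ, w⟩²` over the `ε`-ball, which is
`ε²‖w‖²` by Cauchy–Schwarz, attained at `Δ = ε w / ‖w‖`. -/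

section

variable {ι : Type*} [Fintype ι]

lemma isGreatest_sq_sum_mul_image_ball {ε : ℝ} (hε : 0 ≤ ε) (w : ι → ℝ) :
    IsGreatest ((fun Δ : ι → ℝ => (∑ i, Δ i * w i) ^ 2) '' {Δ | √(∑ i, Δ i ^ 2) ≤ ε})
      (ε ^ 2 * ∑ i, w i ^ 2) := by
  have hw : 0 ≤ ∑ i, w i ^ 2 := by positivity
  refine ⟨?_, ?_⟩
  · rcases hw.eq_or_lt with hw0 | hwpos
    · exact ⟨0, by simp [hε], by simp [← hw0]⟩
    set t := √(∑ i, w i ^ 2)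
    have ht : 0 < t := Real.sqrt_pos.2 hwpos
    have ht2 : t ^ 2 = ∑ i, w i ^ 2 := Real.sq_sqrt hw
    refine ⟨fun i => ε / t * w i, ?_, ?_⟩
    · have hnorm : ∑ i, (ε / t * w i) ^ 2 = ε ^ 2 := by
        simp_rw [mul_pow, ← Finset.mul_sum, ← ht2]
        field_simp
      simp [hnorm, Real.sqrt_sq hε]
    · have hinner : ∑ i, ε / t * w i * w i = ε * t := by
        simp_rw [mul_assoc, ← Finset.mul_sum, ← sq, ← ht2]
        field_simp
      simp only [hinner, mul_pow, ht2]
  · rintro _ ⟨Δ, hΔ, rfl⟩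
    have hΔ2 : ∑ i, Δ i ^ 2 ≤ ε ^ 2 := (Real.sqrt_le_left hε).1 hΔ
    calc (∑ i, Δ i * w i) ^ 2 ≤ (∑ i, Δ i ^ 2) * ∑ i, w i ^ 2 :=
          Finset.sum_mul_sq_le_sq_mul_sq _ _ _
      _ ≤ ε ^ 2 * ∑ i, w i ^ 2 := mul_le_mul_of_nonneg_right hΔ2 hw

lemma ae_eval_eq_zero_of_variance_eq_zero {σsq : ι → ℝ≥0} {i : ι} (hσ : σsq i = 0) :
    ∀ᵐ x ∂(Measure.pi fun j => gaussianReal 0 (σsq j)), x i = 0 := by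
  have h : ∀ᵐ y ∂gaussianReal 0 (σsq i), y = 0 := by
    rw [hσ, gaussianReal_zero_var, ae_dirac_eq]
    exact Filter.eventually_pure.2 rfl
  exact (Measure.tendsto_eval_ae_ae (μ := fun j => gaussianReal 0 (σsq j))).eventually h

lemma ae_sum_mul_sub_eq_zero {σsq : ι → ℝ≥0} {w wstar : ι → ℝ}
    (hmin : ∀ i, (σsq i : ℝ) * (w i - wstar i) = 0) :
    ∀ᵐ x ∂(Measure.pi fun j => gaussianReal 0 (σsq j)), ∑ i, x i * (w i - wstar i) = 0 := by
  have hcoord : ∀ i, ∀ᵐ x ∂(Measure.pi fun j => gaussianReal 0 (σsq j)),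
      x i * (w i - wstar i) = 0 := by
    intro i
    rcases mul_eq_zero.1 (hmin i) with hσ | hw
    · filter_upwards [ae_eval_eq_zero_of_variance_eq_zero (NNReal.coe_eq_zero.1 hσ)] with x hx
      rw [hx, zero_mul]
    · exact .of_forall fun x => by rw [hw, mul_zero]
  filter_upwards [ae_all_iff.2 hcoord] with x hx
  exact Finset.sum_eq_zero fun i _ => hx i

end

theorem risk_at_standard_minimizer_general (d : ℕ)
    (σsq : Fin d → ℝ≥0) (ε : ℝ) (hε : 0 ≤ ε) (w wstar : Fin d → ℝ)
    (hmin : ∀ i, (σsq i : ℝ) * (w i - wstar i) = 0) :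
    stdRisk d σsq wstar w = 0 ∧
    advRisk d σsq wstar ε w = ε^2 / 2 * ∑ i, (w i)^2 := by
  have hres := ae_sum_mul_sub_eq_zero hmin
  have hsup := (Monotone.map_isGreatest (f := fun t : ℝ => 1 / 2 * t)
    (fun _ _ h => by linarith) (isGreatest_sq_sum_mul_image_ball hε w)).csSup_eq
  constructor
  · rw [stdRisk, integral_congr_ae (g := fun _ => 0)]
    · simp
    · filter_upwards [hres] with x hx
      simp [hx]
  · rw [advRisk, integral_congr_ae (g := fun _ => ε ^ 2 / 2 * ∑ i, w i ^ 2)]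
    · simp
    · filter_upwards [hres] with x hx
      simp only [hx, zero_add, Set.image_image] at hsup ⊢
      rw [hsup]
      ring

/-- If `w` is a standard risk minimizer (it agrees with `w*` on every coordinate
with positive variance), then its standard risk is `0` and its adversarial risk
equals `(ε²/2)‖w‖₂²`. -/
theorem risk_at_standard_minimizer (d : ℕ) (hd : 1 ≤ d)
    (σsq : Fin d → ℝ≥0) (ε : ℝ) (hε : 0 ≤ ε) (w wstar : Fin d → ℝ)
    (hmin : ∀ i, (σsq i : ℝ) * (w i - wstar i) = 0) :
    stdRisk d σsq wstar w = 0 ∧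
    advRisk d σsq wstar ε w = ε^2 / 2 * ∑ i, (w i)^2 :=
  risk_at_standard_minimizer_general d σsq ε hε w wstar hmin
end

section
/- Let Δmin, Δmax ∈ ℝ with 0 < Δmin ≤ Δmax, let Δ : ℕ → ℝ satisfy Δmin ≤ Δ(t) ≤ Δmax for all t, and let x : ℕ → ℝ satisfy x(t+1) = x(t) − sgn(x(t))·Δ(t) for all t. Then: (i) there exists t with |x(t)| ≤ Δmax; (ii) for every t, if |x(t)| ≤ Δmax then |x(t')| ≤ Δmax for all t' ≥ t; consequently there exists t such that |x(t')| ≤ Δmax for all t' ≥ t. -/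
/-!
Writing `a = sign a * |a|`, one step replaces `|a|` by `||a| - d|`. Hence a step of length
`d ∈ [Δmin, Δmax]` keeps `|x|` within `Δmax` once it is there, and while `|x| > Δmax ≥ d` it
lowers `|x|` by exactly `d ≥ Δmin > 0`, which cannot go on forever.
-/

namespace Real

theorem abs_sub_sign_mul {a : ℝ} (ha : a ≠ 0) (d : ℝ) : |a - sign a * d| = |(|a| - d)| := by
  rcases ha.lt_or_gt with h | h
  · rw [sign_of_neg h, abs_of_neg h, ← abs_neg]
    ring_nf
  · rw [sign_of_pos h, abs_of_pos h, one_mul]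

theorem abs_sub_sign_mul_le {a d M : ℝ} (ha : |a| ≤ M) (hd₀ : 0 ≤ d) (hdM : d ≤ M) :
    |a - sign a * d| ≤ M := by
  rcases eq_or_ne a 0 with rfl | ha₀
  · simpa [sign_zero] using ha
  · rw [abs_sub_sign_mul ha₀]
    exact abs_sub_le_of_nonneg_of_le (abs_nonneg a) ha hd₀ hdM

theorem abs_sub_sign_mul_of_le_abs {a d : ℝ} (hd₀ : 0 ≤ d) (hd : d ≤ |a|) :
    |a - sign a * d| = |a| - d := by
  rcases eq_or_ne a 0 with rfl | ha₀
  · obtain rfl : d = 0 := le_antisymm (by simpa using hd) hd₀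
    simp
  · rw [abs_sub_sign_mul ha₀, abs_of_nonneg (sub_nonneg.2 hd)]

end Real

theorem exists_le_of_forall_lt_imp_le_sub {u : ℕ → ℝ} {M ε : ℝ} (hε : 0 < ε)
    (h : ∀ t, M < u t → u (t + 1) ≤ u t - ε) : ∃ t, u t ≤ M := by
  by_contra! hlt
  have hdecay : ∀ t : ℕ, u t ≤ u 0 - t * ε := by
    intro t
    induction t with
    | zero => simp
    | succ n ih =>
      push_cast
      linarith [h n (hlt n)]
  obtain ⟨n, hn⟩ := exists_nat_gt ((u 0 - M) / ε)
  rw [div_lt_iff₀ hε] at hn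
  linarith [hdecay n, hlt n]

theorem sign_update_enters_and_stays_general (Δmin Δmax : ℝ)
    (hmin : 0 < Δmin)
    (Δ : ℕ → ℝ) (hΔ : ∀ t, Δmin ≤ Δ t ∧ Δ t ≤ Δmax)
    (x : ℕ → ℝ) (hx : ∀ t, x (t+1) = x t - Real.sign (x t) * Δ t) :
    (∃ t, |x t| ≤ Δmax) ∧
    (∀ t, |x t| ≤ Δmax → ∀ t' ≥ t, |x t'| ≤ Δmax) ∧
    (∃ t, ∀ t' ≥ t, |x t'| ≤ Δmax) := by
  have hΔ₀ : ∀ t, 0 ≤ Δ t := fun t => hmin.le.trans (hΔ t).1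
  have henter : ∃ t, |x t| ≤ Δmax := by
    refine exists_le_of_forall_lt_imp_le_sub hmin fun t ht => ?_
    rw [hx t, Real.abs_sub_sign_mul_of_le_abs (hΔ₀ t) ((hΔ t).2.trans ht.le)]
    linarith [(hΔ t).1]
  have hstay : ∀ t, |x t| ≤ Δmax → ∀ t' ≥ t, |x t'| ≤ Δmax := fun t ht t' ht' =>
    Nat.le_induction ht (fun n _ hn => (hx n).symm ▸
      Real.abs_sub_sign_mul_le hn (hΔ₀ n) (hΔ n).2) t' ht'
  exact ⟨henter, hstay, henter.imp hstay⟩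

/-- For the update `x(t+1) = x(t) − sgn(x(t))·Δ(t)` with steps in
`[Δmin, Δmax]`, `0 < Δmin`: (i) some iterate satisfies `|x(t)| ≤ Δmax`;
(ii) once `|x(t)| ≤ Δmax`, all later iterates stay `Δmax`-bounded; hence
eventually all iterates are `Δmax`-bounded. -/
theorem sign_update_enters_and_stays (Δmin Δmax : ℝ)
    (hmin : 0 < Δmin) (hle : Δmin ≤ Δmax)
    (Δ : ℕ → ℝ) (hΔ : ∀ t, Δmin ≤ Δ t ∧ Δ t ≤ Δmax)
    (x : ℕ → ℝ) (hx : ∀ t, x (t+1) = x t - Real.sign (x t) * Δ t) :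
    (∃ t, |x t| ≤ Δmax) ∧
    (∀ t, |x t| ≤ Δmax → ∀ t' ≥ t, |x t'| ≤ Δmax) ∧
    (∃ t, ∀ t' ≥ t, |x t'| ≤ Δmax) :=
  sign_update_enters_and_stays_general Δmin Δmax hmin Δ hΔ x hx
end
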